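/- arXiv:1403.5260 — 2 statements merged into one kernel-verified Lean document; each statement's English description precedes it below -/
import Mathlib

section
/- At the critical point τ* = c_t/(c_{h2}-c_{h1}), the Hessian determinant of TAC(τ,T) = c_o/T + c_{h1}[(D_1/2)T + (D_2/2)(T - τ²/T)] + c_{h2}(D_2/2)(τ²/T) + D_2 c_t(1-τ/T) equals H₀ = (2D_2/T⁴)[c_o(c_{h2}-c_{h1}) - (1/2)D_2 c_t²], which is strictly positive if and only if c_t < √(2c_o(c_{h2}-c_{h1})/D_2). -/
/-- Derivative of a quadratic. -/
lemma dq (a b c x : ℝ) : deriv (fun y : ℝ => a * y ^ 2 + b * y + c) x = 2 * a * x + b := by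
  have h : HasDerivAt (fun y : ℝ => a * y ^ 2 + b * y + c)
      (a * ((2 : ℕ) * x ^ 1) + b * 1) x := by
    exact (((hasDerivAt_pow 2 x).const_mul a).add ((hasDerivAt_id x).const_mul b)).add_const c
  rw [h.deriv]; push_cast; ring

/-- Second derivative of P/t + Qt + R away from 0. -/
lemma d2 (P Q R x : ℝ) (hx : x ≠ 0) :
    deriv (deriv (fun t : ℝ => P * t⁻¹ + Q * t + R)) x = 2 * P / x ^ 3 := by
  have hder : ∀ y : ℝ, y ≠ 0 →
      deriv (fun t : ℝ => P * t⁻¹ + Q * t + R) y = P * (-(y ^ 2)⁻¹) + Q * 1 := by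
    intro y hy
    exact ((((hasDerivAt_inv hy).const_mul P).add ((hasDerivAt_id y).const_mul Q)).add_const R).deriv
  have hev : deriv (fun t : ℝ => P * t⁻¹ + Q * t + R)
      =ᶠ[nhds x] fun y => P * (-(y ^ 2)⁻¹) + Q * 1 := by
    filter_upwards [eventually_ne_nhds hx] with y hy using hder y hy
  rw [hev.deriv_eq]
  have h2 : HasDerivAt (fun y : ℝ => P * (-(y ^ 2)⁻¹) + Q * 1)
      (P * (-(-(((2 : ℕ) * x ^ 1)) / (x ^ 2) ^ 2))) x := by
    have := ((hasDerivAt_pow 2 x).inv (pow_ne_zero 2 hx)).neg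
    exact (this.const_mul P).add_const (Q * 1)
  rw [h2.deriv]
  have hx2 : x ^ 2 ≠ 0 := pow_ne_zero 2 hx
  field_simp
  ring

/-- At τ* = c_t/(c_{h2}-c_{h1}), the Hessian determinant of TAC equals
(2D₂/T⁴)[c_o(c_{h2}-c_{h1}) - (1/2)D₂c_t²], positive iff c_t < √(2c_o(c_{h2}-c_{h1})/D₂). -/
theorem stmt_3 (co ch1 ch2 ct D1 D2 T : ℝ)
    (hco : 0 < co) (hch1 : 0 < ch1) (hch2 : 0 < ch2) (hct : 0 < ct)
    (hD1 : 0 < D1) (hD2 : 0 < D2) (hT : 0 < T) (hh : ch1 < ch2)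
    (TAC : ℝ → ℝ → ℝ)
    (hTAC : TAC = fun τ t => co / t + ch1 * ((D1 / 2) * t + (D2 / 2) * (t - τ ^ 2 / t))
      + ch2 * (D2 / 2) * (τ ^ 2 / t) + D2 * ct * (1 - τ / t))
    (τs : ℝ) (hτs : τs = ct / (ch2 - ch1))
    (H0 : ℝ)
    (hH0 : H0 = deriv (deriv (fun τ => TAC τ T)) τs * deriv (deriv (fun t => TAC τs t)) T
      - (deriv (fun t => deriv (fun τ => TAC τ t) τs) T) ^ 2) :
    H0 = (2 * D2 / T ^ 4) * (co * (ch2 - ch1) - (1 / 2) * D2 * ct ^ 2) ∧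
    (0 < H0 ↔ ct < Real.sqrt (2 * co * (ch2 - ch1) / D2)) := by
  have hTne : T ≠ 0 := hT.ne'
  have hch : ch2 - ch1 ≠ 0 := sub_ne_zero.mpr hh.ne'
  -- τ-direction second derivative
  have eτ : (fun τ => TAC τ T)
      = fun τ => ((ch2 - ch1) * (D2 / 2) / T) * τ ^ 2 + (-(D2 * ct) / T) * τ
        + (co / T + ch1 * ((D1 / 2) * T + (D2 / 2) * T) + D2 * ct) := by
    funext τ; rw [hTAC]; ring
  have hττ : deriv (deriv (fun τ => TAC τ T)) τs = (ch2 - ch1) * D2 / T := by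
    rw [eτ]
    have e1 : deriv (fun τ : ℝ => ((ch2 - ch1) * (D2 / 2) / T) * τ ^ 2 + (-(D2 * ct) / T) * τ
        + (co / T + ch1 * ((D1 / 2) * T + (D2 / 2) * T) + D2 * ct))
        = fun τ => (0 : ℝ) * τ ^ 2 + (2 * ((ch2 - ch1) * (D2 / 2) / T)) * τ + (-(D2 * ct) / T) := by
      funext y; rw [dq]; ring
    rw [e1, dq]; ring
  -- mixed derivative is 0
  have hmix : (fun t => deriv (fun τ => TAC τ t) τs) = fun _ : ℝ => (0 : ℝ) := by
    funext t
    have e : (fun τ => TAC τ t)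
        = fun τ => ((ch2 - ch1) * (D2 / 2) / t) * τ ^ 2 + (-(D2 * ct) / t) * τ
          + (co / t + ch1 * ((D1 / 2) * t + (D2 / 2) * t) + D2 * ct) := by
      funext τ; rw [hTAC]; ring
    rw [e, dq, hτs]
    have : 2 * ((ch2 - ch1) * (D2 / 2) / t) * (ct / (ch2 - ch1)) + -(D2 * ct) / t
        = (1 / t) * ((ch2 - ch1) / (ch2 - ch1) * (D2 * ct) - D2 * ct) := by ring
    rw [this, div_self hch]; ring
  -- t-direction second derivative
  set P : ℝ := co + (ch2 - ch1) * (D2 / 2) * τs ^ 2 - D2 * ct * τs with hP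
  have et : (fun t => TAC τs t)
      = fun t => P * t⁻¹ + (ch1 * (D1 / 2 + D2 / 2)) * t + D2 * ct := by
    funext t; rw [hTAC, hP]; ring
  have htt : deriv (deriv (fun t => TAC τs t)) T = 2 * P / T ^ 3 := by
    rw [et]; exact d2 _ _ _ T hTne
  have hH : H0 = (2 * D2 / T ^ 4) * (co * (ch2 - ch1) - (1 / 2) * D2 * ct ^ 2) := by
    rw [hH0, hττ, htt, hmix, deriv_const, hP, hτs]
    field_simp
    ring
  refine ⟨hH, ?_⟩
  rw [hH, Real.lt_sqrt hct.le, lt_div_iff₀ hD2]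
  have hc : 0 < 2 * D2 / T ^ 4 := by positivity
  rw [mul_pos_iff_of_pos_left hc]
  constructor <;> intro h <;> nlinarith
end

section
/- If c_t > 0, c_{h2} > c_{h1}, and D_2 > 0, then the full substitution average cost √(2c_o c_{h1}(D_1+D_2)) + D_2 c_t strictly exceeds the partial substitution optimal average cost whenever c_t < √(2c_o(c_{h2}-c_{h1})/D_2); i.e., full substitution is never optimal when partial substitution is feasible. -/
lemma stmt_13_aux (co ch1 ch2 ct D1 D2 sA sB : ℝ)
    (hΔ : 0 < ch2 - ch1)
    (hsApos : 0 < sA) (hsBpos : 0 < sB)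
    (hA' : sA ^ 2 = 2 * co - D2 * ct ^ 2 / (ch2 - ch1))
    (hB' : sB ^ 2 = ch1 * (D1 + D2)) :
    co / (sA / sB) + ch1 * ((D1 / 2) * (sA / sB) + (D2 / 2) * ((sA / sB) - (ct / (ch2 - ch1)) ^ 2 / (sA / sB)))
      + ch2 * (D2 / 2) * ((ct / (ch2 - ch1)) ^ 2 / (sA / sB)) + D2 * ct * (1 - (ct / (ch2 - ch1)) / (sA / sB))
      = sA * sB + D2 * ct := by
  set T := sA / sB with hT
  have hTne : T ≠ 0 := div_ne_zero hsApos.ne' hsBpos.ne'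
  set τ : ℝ := ct / (ch2 - ch1) with hτ
  have expand : co / T + ch1 * ((D1 / 2) * T + (D2 / 2) * (T - τ ^ 2 / T))
      + ch2 * (D2 / 2) * (τ ^ 2 / T) + D2 * ct * (1 - τ / T)
      = (co + (ch2 - ch1) * (D2 / 2) * τ ^ 2 - D2 * ct * τ) / T
        + (ch1 * (D1 + D2) / 2) * T + D2 * ct := by
    field_simp
    ring
  have hnum : co + (ch2 - ch1) * (D2 / 2) * τ ^ 2 - D2 * ct * τ = sA ^ 2 / 2 := by
    rw [hτ, hA']
    field_simp
    ring
  rw [expand, hnum, ← hB', hT]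
  field_simp
  ring

/-- If c_t > 0, c_{h2} > c_{h1}, D₂ > 0 and c_t < √(2c_o(c_{h2}-c_{h1})/D₂), then
the full substitution average cost strictly exceeds the partial substitution
optimal average cost TAC(τ*, T*): full substitution is never optimal. -/
theorem stmt_13 (co ch1 ch2 ct D1 D2 : ℝ)
    (hco : 0 < co) (hch1 : 0 < ch1) (hch2 : 0 < ch2) (hct : 0 < ct)
    (hD1 : 0 < D1) (hD2 : 0 < D2) (hh : ch1 < ch2)
    (hsmall : ct < Real.sqrt (2 * co * (ch2 - ch1) / D2))
    (TAC : ℝ → ℝ → ℝ)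
    (hTAC : TAC = fun τ T => co / T + ch1 * ((D1 / 2) * T + (D2 / 2) * (T - τ ^ 2 / T))
      + ch2 * (D2 / 2) * (τ ^ 2 / T) + D2 * ct * (1 - τ / T))
    (τs Ts : ℝ)
    (hτs : τs = ct / (ch2 - ch1))
    (hTs : Ts = Real.sqrt ((2 * co - D2 * ct ^ 2 / (ch2 - ch1)) / (ch1 * (D1 + D2)))) :
    TAC τs Ts < Real.sqrt (2 * co * ch1 * (D1 + D2)) + D2 * ct := by
  have hΔ : (0:ℝ) < ch2 - ch1 := by linarith
  have hct2 : ct ^ 2 < 2 * co * (ch2 - ch1) / D2 := (Real.lt_sqrt hct.le).mp hsmall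
  have h1 : ct ^ 2 * D2 < 2 * co * (ch2 - ch1) := (lt_div_iff₀ hD2).mp hct2
  set A : ℝ := 2 * co - D2 * ct ^ 2 / (ch2 - ch1) with hAdef
  set B : ℝ := ch1 * (D1 + D2) with hBdef
  have hB : (0:ℝ) < B := by positivity
  have hA : (0:ℝ) < A := by
    rw [hAdef, sub_pos, div_lt_iff₀ hΔ]; nlinarith
  set sA := Real.sqrt A with hsA
  set sB := Real.sqrt B with hsB
  have hsApos : 0 < sA := Real.sqrt_pos.mpr hA
  have hsBpos : 0 < sB := Real.sqrt_pos.mpr hB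
  have hsA2 : sA ^ 2 = A := Real.sq_sqrt hA.le
  have hsB2 : sB ^ 2 = B := Real.sq_sqrt hB.le
  have hTsval : Ts = sA / sB := by
    rw [hTs, Real.sqrt_div hA.le]
  have key : TAC τs Ts = sA * sB + D2 * ct := by
    rw [hTAC, hτs, hTsval]
    exact stmt_13_aux co ch1 ch2 ct D1 D2 sA sB hΔ hsApos hsBpos hsA2 hsB2
  rw [key]
  have hRHS : Real.sqrt (2 * co * ch1 * (D1 + D2)) = Real.sqrt (2 * co) * sB := by
    rw [hsB, hBdef, ← Real.sqrt_mul (by positivity : (0:ℝ) ≤ 2 * co)]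
    ring_nf
  rw [hRHS]
  have hAlt : A < 2 * co := by
    rw [hAdef]
    have : 0 < D2 * ct ^ 2 / (ch2 - ch1) := by positivity
    linarith
  have h2 : sA < Real.sqrt (2 * co) := Real.sqrt_lt_sqrt hA.le hAlt
  have h3 := mul_lt_mul_of_pos_right h2 hsBpos
  linarith
end
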